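/- arXiv:2408.15634 — 6 statements merged into one kernel-verified Lean document; each statement's English description precedes it below -/
import Mathlib

section
/- Under Assumptions 1, 3 and 4, the decomposed vector field satisfies, for every x ∈ ℝ_+^n: (i) ℱ^I(x, λ(x)) ≥ 0 componentwise; (ii) for every infected index i ∈ {1,…,n_I} with x_i = 0, the i-th component of 𝒱^I(x, λ(x)) is nonnegative; (iii) for every uninfected index i ∈ {n_I+1,…,n} with x_i = 0, the corresponding component of 𝒱^U(x, λ(x)) is nonnegative; (iv) for every x ∈ X_s one has ℱ^I(x, λ(x)) = 0 and 𝒱^I(x, λ(x)) = 0. (These are assumptions (A.1)–(A.4) of van den Driessche–Watmough.) -/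
/-!
Statement 0: Under Assumptions 1, 3 and 4, the decomposed vector field satisfies
assumptions (A.1)–(A.4) of van den Driessche–Watmough.
-/

open Matrix

noncomputable section

/-- The state space `ℝ^n` with `n = n_I + n_U`, infected coordinates indexed by
`Fin nI` (via `Sum.inl`) and uninfected ones by `Fin nU` (via `Sum.inr`). -/
abbrev EpiState (nI nU : ℕ) := (Fin nI ⊕ Fin nU) → ℝ

/-- Infected part of a state. -/
def xInf {nI nU : ℕ} (x : EpiState nI nU) : Fin nI → ℝ := fun i => x (Sum.inl i)

/-- Uninfected part of a state. -/
def xUnf {nI nU : ℕ} (x : EpiState nI nU) : Fin nU → ℝ := fun j => x (Sum.inr j)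

/-- The vector field `f(x, μ) = ((F₀(μ)+Vᴵ)xᴵ + F₊(μ)xᵁ, Vᵁ x − F₋(μ)xᵁ)`. -/
def epiF {nI nU nL : ℕ} (VI : Matrix (Fin nI) (Fin nI) ℝ)
    (VU : Matrix (Fin nU) (Fin nI ⊕ Fin nU) ℝ)
    (F0 : (Fin nL → ℝ) → Matrix (Fin nI) (Fin nI) ℝ)
    (Fp : (Fin nL → ℝ) → Matrix (Fin nI) (Fin nU) ℝ)
    (Fm : (Fin nL → ℝ) → Matrix (Fin nU) (Fin nU) ℝ)
    (x : EpiState nI nU) (μ : Fin nL → ℝ) : EpiState nI nU :=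
  Sum.elim ((F0 μ + VI).mulVec (xInf x) + (Fp μ).mulVec (xUnf x))
    (VU.mulVec x - (Fm μ).mulVec (xUnf x))

/-- The set of disease-free states `X_s`. -/
def XsSet (nI nU : ℕ) : Set (EpiState nI nU) :=
  {x | (∀ i, x (Sum.inl i) = 0) ∧ ∀ j, 0 ≤ x (Sum.inr j)}

/-- The set of disease-free equilibria `X_eq`. -/
def XeqSet {nI nU nL : ℕ} (VI : Matrix (Fin nI) (Fin nI) ℝ)
    (VU : Matrix (Fin nU) (Fin nI ⊕ Fin nU) ℝ)
    (F0 : (Fin nL → ℝ) → Matrix (Fin nI) (Fin nI) ℝ)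
    (Fp : (Fin nL → ℝ) → Matrix (Fin nI) (Fin nU) ℝ)
    (Fm : (Fin nL → ℝ) → Matrix (Fin nU) (Fin nU) ℝ) : Set (EpiState nI nU) :=
  {x ∈ XsSet nI nU | epiF VI VU F0 Fp Fm x 0 = 0}

/-- A real matrix is Metzler if its off-diagonal entries are nonnegative. -/
def Metzler {ι : Type*} (M : Matrix ι ι ℝ) : Prop := ∀ i j, i ≠ j → 0 ≤ M i j

/-- `F^I_-(μ)`: minus the diagonal part of `F₀(μ)`. -/
def FIminus {nI nL : ℕ} (F0 : (Fin nL → ℝ) → Matrix (Fin nI) (Fin nI) ℝ)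
    (μ : Fin nL → ℝ) : Matrix (Fin nI) (Fin nI) ℝ :=
  Matrix.diagonal fun i => -(F0 μ i i)

/-- `F^I_+(μ) := F₀(μ) + F^I_-(μ)`, a matrix with zero diagonal. -/
def FIplus {nI nL : ℕ} (F0 : (Fin nL → ℝ) → Matrix (Fin nI) (Fin nI) ℝ)
    (μ : Fin nL → ℝ) : Matrix (Fin nI) (Fin nI) ℝ :=
  F0 μ + FIminus F0 μ

/-- New-infections term `ℱᴵ(x,μ) := F^I₊(μ)xᴵ + F₊(μ)xᵁ`. -/
def calFI {nI nU nL : ℕ} (F0 : (Fin nL → ℝ) → Matrix (Fin nI) (Fin nI) ℝ)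
    (Fp : (Fin nL → ℝ) → Matrix (Fin nI) (Fin nU) ℝ)
    (x : EpiState nI nU) (μ : Fin nL → ℝ) : Fin nI → ℝ :=
  (FIplus F0 μ).mulVec (xInf x) + (Fp μ).mulVec (xUnf x)

/-- Transfer term of infected compartments `𝒱ᴵ(x,μ) := Vᴵxᴵ − F^I₋(μ)xᴵ`. -/
def calVI {nI nU nL : ℕ} (VI : Matrix (Fin nI) (Fin nI) ℝ)
    (F0 : (Fin nL → ℝ) → Matrix (Fin nI) (Fin nI) ℝ)
    (x : EpiState nI nU) (μ : Fin nL → ℝ) : Fin nI → ℝ :=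
  VI.mulVec (xInf x) - (FIminus F0 μ).mulVec (xInf x)

/-- Transfer term of uninfected compartments `𝒱ᵁ(x,μ) := Vᵁx − F₋(μ)xᵁ`. -/
def calVU {nI nU nL : ℕ} (VU : Matrix (Fin nU) (Fin nI ⊕ Fin nU) ℝ)
    (Fm : (Fin nL → ℝ) → Matrix (Fin nU) (Fin nU) ℝ)
    (x : EpiState nI nU) (μ : Fin nL → ℝ) : Fin nU → ℝ :=
  VU.mulVec x - (Fm μ).mulVec (xUnf x)

theorem stmt0_vdDW_assumptions {nI nU nL : ℕ}
    (VI : Matrix (Fin nI) (Fin nI) ℝ) (VU : Matrix (Fin nU) (Fin nI ⊕ Fin nU) ℝ)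
    (F0 : (Fin nL → ℝ) → Matrix (Fin nI) (Fin nI) ℝ)
    (Fp : (Fin nL → ℝ) → Matrix (Fin nI) (Fin nU) ℝ)
    (Fm : (Fin nL → ℝ) → Matrix (Fin nU) (Fin nU) ℝ)
    (lam : EpiState nI nU → Fin nL → ℝ)
    -- Assumption 1
    (hF0lin : IsLinearMap ℝ F0) (hFplin : IsLinearMap ℝ Fp) (hFmlin : IsLinearMap ℝ Fm)
    (hF0M : ∀ μ : Fin nL → ℝ, (∀ l, 0 ≤ μ l) → Metzler (F0 μ))
    (hFpPos : ∀ μ : Fin nL → ℝ, (∀ l, 0 ≤ μ l) → ∀ i j, 0 ≤ Fp μ i j)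
    (hFmPos : ∀ μ : Fin nL → ℝ, (∀ l, 0 ≤ μ l) → ∀ i j, 0 ≤ Fm μ i j)
    (hFmDiag : ∀ μ : Fin nL → ℝ, (∀ l, 0 ≤ μ l) → ∀ i j, i ≠ j → Fm μ i j = 0)
    (hF0sum : ∀ μ : Fin nL → ℝ, (∀ l, 0 ≤ μ l) → ∀ j, ∑ i, F0 μ i j = 0)
    (hFpFm : ∀ μ : Fin nL → ℝ, (∀ l, 0 ≤ μ l) → ∀ j, ∑ i, Fp μ i j = ∑ i, Fm μ i j)
    -- Assumption 3
    (hVUU_M : Metzler (VU.submatrix id Sum.inr))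
    (hVUU_sum : ∀ j, ∑ i, VU i (Sum.inr j) = 0)
    (hVUU_simple : Polynomial.rootMultiplicity 0 (VU.submatrix id Sum.inr).charpoly = 1)
    (hVI_M : Metzler VI)
    (hVUI_pos : ∀ i j, 0 ≤ VU i (Sum.inl j))
    (hVUI_ne : VU.submatrix id Sum.inl ≠ 0)
    (hbal : ∀ j, ∑ i : Fin nU, VU i (Sum.inl j) ≤ -∑ i, VI i j)
    (hpos : ∀ j : Fin nI, 0 < ∑ i : Fin nU, VU i (Sum.inl j))
    -- Assumption 4
    (hlamPos : ∀ x : EpiState nI nU, (∀ idx, 0 ≤ x idx) → ∀ l, 0 ≤ lam x l)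
    (hlamXs : ∀ x ∈ XsSet nI nU, lam x = 0) :
    -- (A.1)
    (∀ x : EpiState nI nU, (∀ idx, 0 ≤ x idx) → ∀ i, 0 ≤ calFI F0 Fp x (lam x) i) ∧
    -- (A.2)
    (∀ x : EpiState nI nU, (∀ idx, 0 ≤ x idx) →
      ∀ i : Fin nI, x (Sum.inl i) = 0 → 0 ≤ calVI VI F0 x (lam x) i) ∧
    -- (A.2) for uninfected compartments
    (∀ x : EpiState nI nU, (∀ idx, 0 ≤ x idx) →
      ∀ j : Fin nU, x (Sum.inr j) = 0 → 0 ≤ calVU VU Fm x (lam x) j) ∧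
    -- (A.4)
    (∀ x ∈ XsSet nI nU, calFI F0 Fp x (lam x) = 0 ∧ calVI VI F0 x (lam x) = 0) := by
  refine ⟨?_, ?_, ?_, ?_⟩
  · -- (A.1)
    intro x hx i
    have hμ := hlamPos x hx
    unfold calFI
    simp only [Pi.add_apply, mulVec, dotProduct]
    apply add_nonneg <;> apply Finset.sum_nonneg <;> intro j _
    · apply mul_nonneg _ (hx _)
      by_cases hij : i = j
      · subst hij
        simp [FIplus, FIminus, Matrix.diagonal_apply_eq]
      · have := hF0M _ hμ i j hij
        simpa [FIplus, FIminus, Matrix.diagonal_apply_ne _ hij] using this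
    · exact mul_nonneg (hFpPos _ hμ i j) (hx _)
  · -- (A.2)
    intro x hx i hxi
    unfold calVI
    simp only [Pi.sub_apply, mulVec, dotProduct]
    have h1 : 0 ≤ ∑ j, VI i j * xInf x j := by
      apply Finset.sum_nonneg; intro j _
      by_cases hij : i = j
      · subst hij; simp [xInf, hxi]
      · exact mul_nonneg (hVI_M i j hij) (hx _)
    have h2 : ∑ j, FIminus F0 (lam x) i j * xInf x j = 0 := by
      rw [Finset.sum_eq_single i]
      · simp [xInf, hxi]
      · intro j _ hji; simp [FIminus, Matrix.diagonal_apply_ne' _ hji]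
      · simp
    rw [h2]; simpa using h1
  · -- (A.3)
    intro x hx j hxj
    have hμ := hlamPos x hx
    unfold calVU
    simp only [Pi.sub_apply, mulVec, dotProduct]
    have h1 : 0 ≤ ∑ k, VU j k * x k := by
      apply Finset.sum_nonneg; intro k _
      rcases k with i | j'
      · exact mul_nonneg (hVUI_pos j i) (hx _)
      · by_cases hjj : j = j'
        · subst hjj; simp [hxj]
        · exact mul_nonneg (hVUU_M j j' hjj) (hx _)
    have h2 : ∑ k, Fm (lam x) j k * xUnf x k = 0 := by
      rw [Finset.sum_eq_single j]
      · simp [xUnf, hxj]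
      · intro k _ hkj; rw [hFmDiag _ hμ j k (Ne.symm hkj)]; ring
      · simp
    rw [h2]; simpa using h1
  · -- (A.4)
    intro x hxs
    have hlz : lam x = 0 := hlamXs x hxs
    have hxI : xInf x = 0 := funext fun i => hxs.1 i
    have hF0z : F0 0 = 0 := hF0lin.mk' _ |>.map_zero
    have hFpz : Fp 0 = 0 := hFplin.mk' _ |>.map_zero
    constructor
    · unfold calFI
      rw [hlz, hxI, hFpz]
      simp [FIplus, FIminus, hF0z]
    · unfold calVI
      rw [hxI]
      simp

end
end

section
/- Under Assumptions 1 and 3, the system ẋ = f(x, λ(x)) admits a nonzero disease-free equilibrium point: there exists x* ∈ X_eq with x* ≠ 0. -/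
open Matrix

noncomputable section

/-!
A disease-free state has no infected part, and at `μ = 0` the uninfected block of the vector field
reduces to `Vᵁᵁ xᵁ` with `Vᵁᵁ := Vᵁ[0 ; I]`, so it suffices to find a nonzero `xᵁ ≥ 0` in the kernel
of the Metzler matrix `Vᵁᵁ`, whose columns sum to zero. If there were none, `0` would lie outside
the compact convex image of the standard simplex under `Vᵁᵁ`, and separating them (Gordan's
alternative) would give a row vector `y` with `(y Vᵁᵁ)_j > 0` for every `j`. But at an index `j`
where `y` is maximal, `(y Vᵁᵁ)_j = ∑ i, (y_i - y_j) Vᵁᵁ_ij ≤ 0`.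
-/

theorem Matrix.nonempty_of_ne_zero {m n α : Type*} [Zero α] {M : Matrix m n α} (hM : M ≠ 0) :
    Nonempty m := by
  by_contra hm
  rw [not_nonempty_iff] at hm
  exact hM (Subsingleton.elim _ _)

namespace Metzler

variable {ι : Type*} [Fintype ι] {A : Matrix ι ι ℝ}

theorem exists_vecMul_nonpos (hA : Metzler A) (hsum : ∀ j, ∑ i, A i j = 0) [Nonempty ι]
    (y : ι → ℝ) : ∃ j, (y ᵥ* A) j ≤ 0 := by
  obtain ⟨j, -, hj⟩ := Finset.exists_max_image Finset.univ y Finset.univ_nonempty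
  refine ⟨j, ?_⟩
  have hterm : ∀ i, (y i - y j) * A i j ≤ 0 := fun i => by
    rcases eq_or_ne i j with rfl | hij
    · simp
    · exact mul_nonpos_of_nonpos_of_nonneg (by linarith [hj i (Finset.mem_univ _)]) (hA i j hij)
  calc (y ᵥ* A) j = ∑ i, (y i - y j) * A i j + y j * ∑ i, A i j := by
        simp only [vecMul, dotProduct, sub_mul, Finset.sum_sub_distrib, Finset.mul_sum]; ring
    _ ≤ 0 := by rw [hsum j, mul_zero, add_zero]; exact Finset.sum_nonpos fun i _ => hterm i

theorem exists_mem_stdSimplex_mulVec_eq_zero (hA : Metzler A) (hsum : ∀ j, ∑ i, A i j = 0)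
    [Nonempty ι] : ∃ v ∈ stdSimplex ℝ ι, A *ᵥ v = 0 := by
  classical
  by_contra! hne
  have hK : (0 : ι → ℝ) ∉ A.mulVecLin '' stdSimplex ℝ ι := by
    rintro ⟨v, hv, h0⟩; exact hne v hv h0
  obtain ⟨f, u, hf0, hfK⟩ := geometric_hahn_banach_point_closed
    ((convex_stdSimplex ℝ ι).linear_image A.mulVecLin)
    ((isCompact_stdSimplex ℝ ι).image A.mulVecLin.continuous_of_finiteDimensional).isClosed hK
  obtain ⟨j, hj⟩ := hA.exists_vecMul_nonpos hsum fun i => f (Pi.single i 1)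
  have hcol : f (A *ᵥ Pi.single j 1) = ((fun i => f (Pi.single i 1)) ᵥ* A) j := by
    rw [pi_eq_sum_univ' (A *ᵥ Pi.single j 1), map_sum]
    simp [vecMul, dotProduct, mul_comm]
  have hfj : u < f (A *ᵥ Pi.single j 1) := hfK _ ⟨_, single_mem_stdSimplex ℝ j, rfl⟩
  rw [map_zero] at hf0
  linarith

end Metzler

theorem elim_zero_mem_XeqSet {nI nU nL : ℕ} {VI : Matrix (Fin nI) (Fin nI) ℝ}
    {VU : Matrix (Fin nU) (Fin nI ⊕ Fin nU) ℝ} {F0 : (Fin nL → ℝ) → Matrix (Fin nI) (Fin nI) ℝ}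
    {Fp : (Fin nL → ℝ) → Matrix (Fin nI) (Fin nU) ℝ}
    {Fm : (Fin nL → ℝ) → Matrix (Fin nU) (Fin nU) ℝ} (hFp : Fp 0 = 0) (hFm : Fm 0 = 0)
    {v : Fin nU → ℝ} (hv : ∀ j, 0 ≤ v j) (hker : VU.submatrix id Sum.inr *ᵥ v = 0) :
    Sum.elim (0 : Fin nI → ℝ) v ∈ XeqSet VI VU F0 Fp Fm := by
  refine ⟨⟨fun _ => rfl, hv⟩, ?_⟩
  have hVU : VU *ᵥ Sum.elim 0 v = VU.submatrix id Sum.inr *ᵥ v := by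
    ext i
    simp [mulVec, dotProduct, Fintype.sum_sum_type]
  have hxI : xInf (Sum.elim (0 : Fin nI → ℝ) v) = 0 := rfl
  have hxU : xUnf (Sum.elim (0 : Fin nI → ℝ) v) = v := rfl
  ext (i | j)
  · simp [epiF, hxI, hxU, hFp]
  · simp [epiF, hxU, hFm, hVU, hker]

theorem stmt1_exists_nonzero_DFE_general {nI nU nL : ℕ}
    (VI : Matrix (Fin nI) (Fin nI) ℝ) (VU : Matrix (Fin nU) (Fin nI ⊕ Fin nU) ℝ)
    (F0 : (Fin nL → ℝ) → Matrix (Fin nI) (Fin nI) ℝ)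
    (Fp : (Fin nL → ℝ) → Matrix (Fin nI) (Fin nU) ℝ)
    (Fm : (Fin nL → ℝ) → Matrix (Fin nU) (Fin nU) ℝ)
    -- Assumption 1
    (hFplin : IsLinearMap ℝ Fp) (hFmlin : IsLinearMap ℝ Fm)
    -- Assumption 3
    (hVUU_M : Metzler (VU.submatrix id Sum.inr))
    (hVUU_sum : ∀ j, ∑ i, VU i (Sum.inr j) = 0)
    (hVUI_ne : VU.submatrix id Sum.inl ≠ 0) :
    ∃ xstar ∈ XeqSet VI VU F0 Fp Fm, xstar ≠ 0 := by
  have : Nonempty (Fin nU) := Matrix.nonempty_of_ne_zero hVUI_ne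
  obtain ⟨v, hv, hker⟩ := hVUU_M.exists_mem_stdSimplex_mulVec_eq_zero hVUU_sum
  refine ⟨Sum.elim 0 v, elim_zero_mem_XeqSet hFplin.map_zero hFmlin.map_zero hv.1 hker, ?_⟩
  rw [← Sum.elim_zero_zero, Ne, Sum.elim_injective'.eq_iff]
  rintro rfl
  simpa using hv.2

theorem stmt1_exists_nonzero_DFE {nI nU nL : ℕ}
    (VI : Matrix (Fin nI) (Fin nI) ℝ) (VU : Matrix (Fin nU) (Fin nI ⊕ Fin nU) ℝ)
    (F0 : (Fin nL → ℝ) → Matrix (Fin nI) (Fin nI) ℝ)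
    (Fp : (Fin nL → ℝ) → Matrix (Fin nI) (Fin nU) ℝ)
    (Fm : (Fin nL → ℝ) → Matrix (Fin nU) (Fin nU) ℝ)
    -- Assumption 1
    (hF0lin : IsLinearMap ℝ F0) (hFplin : IsLinearMap ℝ Fp) (hFmlin : IsLinearMap ℝ Fm)
    (hF0M : ∀ μ : Fin nL → ℝ, (∀ l, 0 ≤ μ l) → Metzler (F0 μ))
    (hFpPos : ∀ μ : Fin nL → ℝ, (∀ l, 0 ≤ μ l) → ∀ i j, 0 ≤ Fp μ i j)
    (hFmPos : ∀ μ : Fin nL → ℝ, (∀ l, 0 ≤ μ l) → ∀ i j, 0 ≤ Fm μ i j)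
    (hFmDiag : ∀ μ : Fin nL → ℝ, (∀ l, 0 ≤ μ l) → ∀ i j, i ≠ j → Fm μ i j = 0)
    (hF0sum : ∀ μ : Fin nL → ℝ, (∀ l, 0 ≤ μ l) → ∀ j, ∑ i, F0 μ i j = 0)
    (hFpFm : ∀ μ : Fin nL → ℝ, (∀ l, 0 ≤ μ l) → ∀ j, ∑ i, Fp μ i j = ∑ i, Fm μ i j)
    -- Assumption 3
    (hVUU_M : Metzler (VU.submatrix id Sum.inr))
    (hVUU_sum : ∀ j, ∑ i, VU i (Sum.inr j) = 0)
    (hVUU_simple : Polynomial.rootMultiplicity 0 (VU.submatrix id Sum.inr).charpoly = 1)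
    (hVI_M : Metzler VI)
    (hVUI_pos : ∀ i j, 0 ≤ VU i (Sum.inl j))
    (hVUI_ne : VU.submatrix id Sum.inl ≠ 0)
    (hbal : ∀ j, ∑ i : Fin nU, VU i (Sum.inl j) ≤ -∑ i, VI i j)
    (hpos : ∀ j : Fin nI, 0 < ∑ i : Fin nU, VU i (Sum.inl j)) :
    ∃ xstar ∈ XeqSet VI VU F0 Fp Fm, xstar ≠ 0 :=
  stmt1_exists_nonzero_DFE_general VI VU F0 Fp Fm hFplin hFmlin hVUU_M hVUU_sum hVUI_ne

end
end

section
/- (Lemma on the exponential of the class block, general form.) For all t ≥ 0, the matrix exponential of tB satisfies e^{tB} = I_r ⊗ e^{tV} + ( ∫_0^t col( e^{(t−s)V}A_1, …, e^{(t−s)V}A_r ) e^{s(V+G)} ds ) (1_r^T ⊗ I_n), where the integral is taken entrywise over s ∈ [0,t]. -/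
/-!
Write `B = I_r ⊗ V + col(A_1, …, A_r) (1_rᵀ ⊗ I_n)`. Duhamel's formula for this perturbation of
`I_r ⊗ V` gives `e^{tB} = I_r ⊗ e^{tV} + ∫₀ᵗ (I_r ⊗ e^{(t-s)V}) col(A) (1_rᵀ ⊗ I_n) e^{sB} ds`.
Since `(1_rᵀ ⊗ I_n) B = (V + G)(1_rᵀ ⊗ I_n)`, the aggregation matrix intertwines the two
exponentials: `(1_rᵀ ⊗ I_n) e^{sB} = e^{s(V+G)} (1_rᵀ ⊗ I_n)`, and `I_r ⊗ e^{(t-s)V}` acts on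
`col(A)` blockwise.
-/

open Matrix

noncomputable section

/-- The block matrix `B ∈ ℝ^{rn×rn}` whose `(i,j)` block equals `A i + δ_{ij} V`. -/
def blockB {r n : ℕ} (V : Matrix (Fin n) (Fin n) ℝ) (A : Fin r → Matrix (Fin n) (Fin n) ℝ) :
    Matrix (Fin r × Fin n) (Fin r × Fin n) ℝ :=
  Matrix.of fun p q => A p.1 p.2 q.2 + if p.1 = q.1 then V p.2 q.2 else 0

/-- The aggregation matrix `1_rᵀ ⊗ I_n ∈ ℝ^{n×rn}`, i.e. the block row `(I_n, …, I_n)`. -/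
def aggMat (r n : ℕ) : Matrix (Fin n) (Fin r × Fin n) ℝ :=
  Matrix.of fun a q => if a = q.2 then 1 else 0

open NormedSpace
open scoped Kronecker

namespace NormedSpace

variable {𝔸 : Type*} [NormedRing 𝔸] [NormedAlgebra ℝ 𝔸] [CompleteSpace 𝔸]

theorem exp_add_smul (X : 𝔸) (u v : ℝ) : exp ((u + v) • X) = exp (u • X) * exp (v • X) := by
  let +nondep : NormedAlgebra ℚ 𝔸 := .restrictScalars ℚ ℝ 𝔸
  rw [add_smul, exp_add_of_commute (((Commute.refl X).smul_left u).smul_right v)]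

theorem hasDerivAt_exp_neg_smul_mul_exp_smul_add (X Y : 𝔸) (s : ℝ) :
    HasDerivAt (fun u : ℝ => exp ((-u) • X) * exp (u • (X + Y)))
      (exp ((-s) • X) * Y * exp (s • (X + Y))) s := by
  have hleft := (hasDerivAt_exp_smul_const X (-s)).scomp s (hasDerivAt_neg s)
  convert hleft.mul (hasDerivAt_exp_smul_const' (X + Y) s) using 1
  · rfl
  · simp only [Function.comp_apply, neg_one_smul, neg_mul, add_mul, mul_add, mul_assoc]
    abel

theorem continuous_exp_smul (X : 𝔸) : Continuous fun s : ℝ => exp (s • X) :=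
  (differentiable_exp_smul_const ℝ X).continuous

/-- Duhamel's (variation-of-constants) formula. -/
theorem exp_smul_add_eq_add_integral (X Y : 𝔸) (t : ℝ) :
    exp (t • (X + Y)) =
      exp (t • X) + ∫ s in (0 : ℝ)..t, exp ((t - s) • X) * Y * exp (s • (X + Y)) := by
  have hcont : Continuous fun s : ℝ => exp ((-s) • X) * Y * exp (s • (X + Y)) :=
    (((continuous_exp_smul X).comp continuous_neg).mul continuous_const).mul
      (continuous_exp_smul (X + Y))
  have hint := hcont.intervalIntegrable (μ := MeasureTheory.volume) 0 t
  have hftc := intervalIntegral.integral_eq_sub_of_hasDerivAt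
    (fun s _ => hasDerivAt_exp_neg_smul_mul_exp_smul_add X Y s) hint
  have hmul := (ContinuousLinearMap.mul ℝ 𝔸 (exp (t • X))).intervalIntegral_comp_comm hint
  simp only [ContinuousLinearMap.mul_apply', hftc, ← mul_assoc, ← exp_add_smul, ← sub_eq_add_neg,
    neg_zero, zero_smul, exp_zero, mul_one, sub_self, one_mul, mul_sub] at hmul
  rw [hmul]
  abel

end NormedSpace

namespace Matrix

-- `exp` only sees the topology, so any Banach-algebra norm will do.
attribute [local instance] Matrix.linftyOpNormedAddCommGroup Matrix.linftyOpNormedSpace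
  Matrix.linftyOpNormedRing Matrix.linftyOpNormedAlgebra

variable {l m n : Type*} [Fintype l] [DecidableEq l] [Fintype m] [DecidableEq m]
  [Fintype n] [DecidableEq n]

theorem mul_exp_eq_exp_mul {P : Matrix m n ℝ} {N : Matrix n n ℝ} {M : Matrix m m ℝ}
    (h : P * N = M * P) : P * exp N = exp M * P := by
  have hpow : ∀ k : ℕ, P * N ^ k = M ^ k * P := by
    intro k
    induction k with
    | zero => simp
    | succ k ih => rw [pow_succ, ← Matrix.mul_assoc, ih, Matrix.mul_assoc, h, ← Matrix.mul_assoc,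
        ← pow_succ]
  have hleft := (exp_series_hasSum_exp' (𝕂 := ℝ) N).map (mulLeftLinearMap n ℝ P)
    (continuous_const.matrix_mul continuous_id)
  have hright := (exp_series_hasSum_exp' (𝕂 := ℝ) M).map (mulRightLinearMap m ℝ P)
    (continuous_id.matrix_mul continuous_const)
  refine hleft.unique ?_
  convert hright using 1
  · funext k
    simp [hpow]
  · rfl

theorem exp_one_kronecker (W : Matrix n n ℝ) :
    exp ((1 : Matrix l l ℝ) ⊗ₖ W) = 1 ⊗ₖ exp W := by
  let f : Matrix n n ℝ →+* Matrix (l × n) (l × n) ℝ :=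
    { toFun := fun W => 1 ⊗ₖ W
      map_one' := one_kronecker_one
      map_mul' := fun A B => by rw [← mul_kronecker_mul, one_mul]
      map_zero' := kronecker_zero _
      map_add' := kronecker_add _ }
  exact (map_exp (𝔹 := Matrix (l × n) (l × n) ℝ) f (continuous_pi fun _ => continuous_pi fun _ =>
    continuous_const.mul (continuous_id.matrix_elem _ _)) W).symm

theorem exp_smul_add_apply (X Y : Matrix n n ℝ) (t : ℝ) (i j : n) :
    exp (t • (X + Y)) i j =
      exp (t • X) i j + ∫ s in (0 : ℝ)..t, (exp ((t - s) • X) * Y * exp (s • (X + Y))) i j := by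
  have hcont : Continuous fun s : ℝ => exp ((t - s) • X) * Y * exp (s • (X + Y)) :=
    (((continuous_exp_smul X).comp (continuous_sub_left t)).mul continuous_const).mul
      (continuous_exp_smul (X + Y))
  calc exp (t • (X + Y)) i j
      = (exp (t • X) + ∫ s in (0 : ℝ)..t, exp ((t - s) • X) * Y * exp (s • (X + Y))) i j :=
        congrArg (· i j) (exp_smul_add_eq_add_integral X Y t)
    _ = _ := by
      rw [add_apply]
      congr 1
      exact ((entryLinearMap ℝ ℝ i j).toContinuousLinearMap.intervalIntegral_comp_comm
        (hcont.intervalIntegrable 0 t)).symm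

end Matrix

section ClassBlock

variable {r n : ℕ}

def colMat (A : Fin r → Matrix (Fin n) (Fin n) ℝ) : Matrix (Fin r × Fin n) (Fin n) ℝ :=
  Matrix.of fun p c => A p.1 p.2 c

theorem blockB_eq_one_kronecker_add (V : Matrix (Fin n) (Fin n) ℝ)
    (A : Fin r → Matrix (Fin n) (Fin n) ℝ) :
    blockB V A = (1 : Matrix (Fin r) (Fin r) ℝ) ⊗ₖ V + colMat A * aggMat r n := by
  ext ⟨i, a⟩ ⟨j, b⟩
  simp [blockB, colMat, aggMat, mul_apply, one_apply, add_comm]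

theorem aggMat_mul_blockB (V : Matrix (Fin n) (Fin n) ℝ) (A : Fin r → Matrix (Fin n) (Fin n) ℝ) :
    aggMat r n * blockB V A = (V + ∑ i, A i) * aggMat r n := by
  ext a ⟨j, b⟩
  simp [blockB, aggMat, mul_apply, Fintype.sum_prod_type, Finset.sum_add_distrib, Matrix.sum_apply,
    add_comm]

theorem one_kronecker_mul_colMat (W : Matrix (Fin n) (Fin n) ℝ)
    (A : Fin r → Matrix (Fin n) (Fin n) ℝ) :
    ((1 : Matrix (Fin r) (Fin r) ℝ) ⊗ₖ W) * colMat A = colMat fun i => W * A i := by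
  ext ⟨i, a⟩ c
  simp [colMat, mul_apply, kroneckerMap_apply, one_apply, Fintype.sum_prod_type]

theorem colMat_mul_mul_aggMat_apply (C : Fin r → Matrix (Fin n) (Fin n) ℝ)
    (Z : Matrix (Fin n) (Fin n) ℝ) (i j : Fin r) (a b : Fin n) :
    (colMat C * (Z * aggMat r n)) (i, a) (j, b) = (C i * Z) a b := by
  simp [colMat, aggMat, mul_apply]

theorem exp_smul_blockB_apply (V : Matrix (Fin n) (Fin n) ℝ)
    (A : Fin r → Matrix (Fin n) (Fin n) ℝ) (t : ℝ) (i j : Fin r) (a b : Fin n) :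
    exp (t • blockB V A) (i, a) (j, b) =
      (if i = j then exp (t • V) a b else 0) +
        ∫ s in (0 : ℝ)..t, (exp ((t - s) • V) * A i * exp (s • (V + ∑ k, A k))) a b := by
  have hagg (s : ℝ) :
      aggMat r n * exp (s • blockB V A) = exp (s • (V + ∑ k, A k)) * aggMat r n :=
    mul_exp_eq_exp_mul (by rw [Matrix.mul_smul, aggMat_mul_blockB, Matrix.smul_mul])
  rw [blockB_eq_one_kronecker_add, exp_smul_add_apply, ← blockB_eq_one_kronecker_add]
  congr 1
  · rw [← kronecker_smul, exp_one_kronecker, kronecker_apply, one_apply]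
    split_ifs <;> simp
  · refine intervalIntegral.integral_congr fun s _ => ?_
    rw [Matrix.mul_assoc, Matrix.mul_assoc, hagg, ← kronecker_smul, exp_one_kronecker,
      ← Matrix.mul_assoc, one_kronecker_mul_colMat, colMat_mul_mul_aggMat_apply]

end ClassBlock

theorem stmt6_exp_block_general {r n : ℕ}
    (V : Matrix (Fin n) (Fin n) ℝ) (A : Fin r → Matrix (Fin n) (Fin n) ℝ)
    (G : Matrix (Fin n) (Fin n) ℝ) (hG : G = ∑ i, A i)
    (t : ℝ) :
    ∀ (i j : Fin r) (a b : Fin n),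
      NormedSpace.exp (t • blockB V A) (i, a) (j, b) =
        (if i = j then NormedSpace.exp (t • V) a b else 0) +
        ∫ s in (0:ℝ)..t,
          (NormedSpace.exp ((t - s) • V) * A i * NormedSpace.exp (s • (V + G))) a b := by
  subst hG
  exact exp_smul_blockB_apply V A t

theorem stmt6_exp_block {r n : ℕ} (hr : 1 ≤ r)
    (V : Matrix (Fin n) (Fin n) ℝ) (A : Fin r → Matrix (Fin n) (Fin n) ℝ)
    (G : Matrix (Fin n) (Fin n) ℝ) (hG : G = ∑ i, A i)
    (t : ℝ) (ht : 0 ≤ t) :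
    ∀ (i j : Fin r) (a b : Fin n),
      NormedSpace.exp (t • blockB V A) (i, a) (j, b) =
        (if i = j then NormedSpace.exp (t • V) a b else 0) +
        ∫ s in (0:ℝ)..t,
          (NormedSpace.exp ((t - s) • V) * A i * NormedSpace.exp (s • (V + G))) a b :=
  stmt6_exp_block_general V A G hG t

end
end

section
/- (Spectral decomposition of the class block.) The characteristic polynomial of B factors as char(B) = char(V + G) · char(V)^{r−1}; in particular, the spectrum of B (with multiplicities) is the union of the spectrum of V + G and r − 1 copies of the spectrum of V. -/
/-!
Let `S` be the `r × r` identity with its last row replaced by ones. Since `1ᵀ = e_lastᵀ S`,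
conjugating `B = I_r ⊗ V + col(A) (1ᵀ ⊗ I_n)` by `S ⊗ I_n` keeps `I_r ⊗ V` and moves the rank-`n`
part into the last block column. The result is block triangular with diagonal blocks
`V, …, V, V + ∑ A_i`, and the characteristic polynomial is the product of theirs.
-/

open Matrix

noncomputable section

namespace Matrix

variable {R ι n : Type*} [CommRing R] [Fintype n] [DecidableEq n]

theorem charpoly_eq_of_mul_eq_mul {B M P : Matrix n n R} (hP : IsUnit P)
    (h : P * B = M * P) : B.charpoly = M.charpoly := by
  obtain ⟨P, rfl⟩ := hP
  rw [← charpoly_units_conj' P M, ← coe_units_inv, mul_assoc, ← h, ← mul_assoc, P.inv_mul, one_mul]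

theorem BlockTriangular.charpoly_eq_prod_submatrix [Fintype ι] [LinearOrder ι]
    {M : Matrix (ι × n) (ι × n) R} (h : M.BlockTriangular (Prod.fst : ι × n → ι)) :
    M.charpoly = ∏ i, (M.submatrix (Prod.mk i) (Prod.mk i)).charpoly := by
  classical
  rw [Matrix.charpoly, h.charmatrix.det_fintype]
  refine Finset.prod_congr rfl fun i _ => ?_
  let e : {p : ι × n // p.1 = i} ≃ n :=
    { toFun := fun p => p.1.2
      invFun := fun a => ⟨(i, a), rfl⟩
      left_inv := by rintro ⟨⟨_, a⟩, rfl⟩; rfl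
      right_inv := fun _ => rfl }
  rw [← charmatrix_toSquareBlock, ← Matrix.charpoly, ← charpoly_reindex e]
  rfl

theorem det_updateRow_one_one (j : n) : ((1 : Matrix n n R).updateRow j 1).det = 1 := by
  have hrow : ∑ k, (1 : n → R) k • (1 : Matrix n n R) k = 1 := by
    ext b
    rw [Finset.sum_apply]
    simp [one_apply]
  have := det_updateRow_sum (1 : Matrix n n R) j 1
  rwa [hrow, Pi.one_apply, one_smul, det_one] at this

end Matrix

open scoped Kronecker

def blockBLastCol {m n : ℕ} (V : Matrix (Fin n) (Fin n) ℝ)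
    (A : Fin (m + 1) → Matrix (Fin n) (Fin n) ℝ) :
    Matrix (Fin (m + 1) × Fin n) (Fin (m + 1) × Fin n) ℝ :=
  Matrix.of fun p q =>
    (if q.1 = Fin.last m then A p.1 p.2 q.2 else 0) + if p.1 = q.1 then V p.2 q.2 else 0

theorem kronecker_one_mul_blockB {m n : ℕ} (V : Matrix (Fin n) (Fin n) ℝ)
    (A : Fin (m + 1) → Matrix (Fin n) (Fin n) ℝ) {S : Matrix (Fin (m + 1)) (Fin (m + 1)) ℝ}
    (hS : S (Fin.last m) = 1) :
    (S ⊗ₖ 1) * blockB V A = blockBLastCol V (fun i => ∑ k, S i k • A k) * (S ⊗ₖ 1) := by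
  ext ⟨i, a⟩ ⟨j, b⟩
  simp only [blockB, blockBLastCol, mul_apply, kroneckerMap_apply, of_apply, one_apply, mul_ite,
    ite_mul, mul_one, mul_zero, zero_mul, mul_add, add_mul, Finset.sum_add_distrib,
    Fintype.sum_prod_type, Finset.sum_ite_eq, Finset.sum_ite_eq', Finset.mem_univ, if_true,
    Finset.sum_ite_irrel, Finset.sum_const_zero, Matrix.sum_apply, Matrix.smul_apply, smul_eq_mul,
    hS, Pi.one_apply]
  ring

theorem blockTriangular_blockBLastCol {m n : ℕ} (V : Matrix (Fin n) (Fin n) ℝ)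
    (A : Fin (m + 1) → Matrix (Fin n) (Fin n) ℝ) :
    (blockBLastCol V A).BlockTriangular Prod.fst := by
  rintro ⟨i, a⟩ ⟨j, b⟩ (hji : j < i)
  simp [blockBLastCol, hji.ne', (hji.trans_le (Fin.le_last i)).ne]

theorem charpoly_blockBLastCol {m n : ℕ} (V : Matrix (Fin n) (Fin n) ℝ)
    (A : Fin (m + 1) → Matrix (Fin n) (Fin n) ℝ) :
    (blockBLastCol V A).charpoly = (V + A (Fin.last m)).charpoly * V.charpoly ^ m := by
  rw [(blockTriangular_blockBLastCol V A).charpoly_eq_prod_submatrix, Fin.prod_univ_castSucc]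
  have hlast : (blockBLastCol V A).submatrix (Prod.mk (Fin.last m)) (Prod.mk (Fin.last m)) =
      V + A (Fin.last m) := by
    ext a b
    simp [blockBLastCol, add_comm]
  have hcastSucc (i : Fin m) :
      (blockBLastCol V A).submatrix (Prod.mk i.castSucc) (Prod.mk i.castSucc) = V := by
    ext a b
    simp [blockBLastCol, Fin.castSucc_ne_last]
  simp only [hlast, hcastSucc, Finset.prod_const, Finset.card_univ, Fintype.card_fin, mul_comm]

theorem stmt10_charpoly_block {r n : ℕ} (hr : 1 ≤ r)
    (V : Matrix (Fin n) (Fin n) ℝ) (A : Fin r → Matrix (Fin n) (Fin n) ℝ)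
    (G : Matrix (Fin n) (Fin n) ℝ) (hG : G = ∑ i, A i) :
    (blockB V A).charpoly = (V + G).charpoly * V.charpoly ^ (r - 1) := by
  obtain ⟨m, rfl⟩ : ∃ m, r = m + 1 := ⟨r - 1, by omega⟩
  set S : Matrix (Fin (m + 1)) (Fin (m + 1)) ℝ := (1 : Matrix _ _ ℝ).updateRow (Fin.last m) 1
  have hSlast : S (Fin.last m) = 1 := updateRow_self
  have hS : IsUnit (S ⊗ₖ (1 : Matrix (Fin n) (Fin n) ℝ)) := by
    rw [isUnit_iff_isUnit_det, det_kronecker, det_updateRow_one_one, det_one, one_pow, one_pow,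
      one_mul]
    exact isUnit_one
  rw [charpoly_eq_of_mul_eq_mul hS (kronecker_one_mul_blockB V A hSlast), charpoly_blockBLastCol]
  simp only [hSlast, Pi.one_apply, one_smul, ← hG, Nat.add_sub_cancel]

end
end

section
/- Let M ∈ ℝ^{m×m} be a matrix such that 0 is a simple eigenvalue of M and every nonzero eigenvalue of M has strictly negative real part. Then for every x_0 ∈ ℝ^m, the limit lim_{t→∞} e^{tM} x_0 exists and belongs to ker M; in other words, every solution of the linear ODE ẋ = Mx converges to an equilibrium as t → ∞. -/
/-!
Over `ℂ`, the space is the sum of the generalized eigenspaces of `M`. On the one belonging to an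
eigenvalue `μ` with `Re μ < 0`, `e^{tM} v = e^{tμ} ∑_{i<k} tⁱ/i! (M - μ)ⁱ v` is a polynomial in
`t` times a decaying exponential, so it tends to `0`. Since `0` is a simple root of the
characteristic polynomial, its generalized eigenspace is `ker M`, on which `e^{tM}` is the identity.
The limit of the real solution is the real part of the complex limit.
-/

open Filter Matrix NormedSpace Topology

theorem Complex.tendsto_pow_mul_exp_mul_atTop_nhds_zero {μ : ℂ} (hμ : μ.re < 0) (k : ℕ) :
    Tendsto (fun t : ℝ => (t : ℂ) ^ k * Complex.exp (t * μ)) atTop (𝓝 0) := by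
  rw [tendsto_zero_iff_norm_tendsto_zero]
  refine (tendsto_rpow_mul_exp_neg_mul_atTop_nhds_zero k (-μ.re) (neg_pos.mpr hμ)).congr' ?_
  filter_upwards [eventually_ge_atTop 0] with t ht
  simp [Complex.norm_exp, abs_of_nonneg ht, mul_comm]

theorem Module.End.maxGenEigenspace_eq_eigenspace_of_rootMultiplicity_eq_one {K V : Type*}
    [Field K] [AddCommGroup V] [Module K V] [FiniteDimensional K V] (f : Module.End K V) {μ : K}
    (h : f.charpoly.rootMultiplicity μ = 1) : f.maxGenEigenspace μ = f.eigenspace μ := by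
  have hμ : f.HasEigenvalue μ := (f.hasEigenvalue_iff_isRoot_charpoly μ).2
    ((Polynomial.rootMultiplicity_pos f.charpoly_monic.ne_zero).1 (by omega))
  refine (Submodule.eq_of_le_of_finrank_le eigenspace_le_maxGenEigenspace ?_).symm
  rw [LinearMap.finrank_maxGenEigenspace_eq, h]
  exact Submodule.one_le_finrank_iff.2 hμ

theorem Module.End.maxGenEigenspace_eq_bot_of_not_isRoot_charpoly {K V : Type*}
    [Field K] [AddCommGroup V] [Module K V] [FiniteDimensional K V] (f : Module.End K V) {μ : K}
    (h : ¬ f.charpoly.IsRoot μ) : f.maxGenEigenspace μ = ⊥ := by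
  rw [← Submodule.finrank_eq_zero, LinearMap.finrank_maxGenEigenspace_eq,
    Polynomial.rootMultiplicity_eq_zero h]

namespace Matrix

theorem re_mulVec_map_ofReal {n : Type*} [Fintype n] (M : Matrix n n ℝ) (L : n → ℂ) (i : n) :
    ((M.map (algebraMap ℝ ℂ) *ᵥ L) i).re = (M *ᵥ fun j => (L j).re) i := by
  simp [mulVec, dotProduct, Complex.re_sum]

variable {n : Type*} [Fintype n] [DecidableEq n]

section Normed

-- `exp` does not depend on the norm; this one only gives access to the Banach-algebra API.
attribute [local instance] Matrix.linftyOpNormedRing Matrix.linftyOpNormedAlgebra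

theorem exp_mulVec_eq_sum_of_pow_mulVec_eq_zero {𝕂 : Type*} [RCLike 𝕂] (A : Matrix n n 𝕂)
    (v : n → 𝕂) {k : ℕ} (hk : A ^ k *ᵥ v = 0) :
    exp A *ᵥ v = ∑ i ∈ Finset.range k, (i.factorial⁻¹ : 𝕂) • (A ^ i *ᵥ v) := by
  have hseries : HasSum (fun i => (i.factorial⁻¹ : 𝕂) • (A ^ i *ᵥ v)) (exp A *ᵥ v) := by
    convert (exp_series_hasSum_exp' (𝕂 := 𝕂) A).map (mulVec.addMonoidHomLeft v)
      (continuous_id.matrix_mulVec continuous_const) using 1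
    · exact funext fun i => (smul_mulVec _ _ _).symm
    · rfl
  refine hseries.unique (hasSum_sum_of_ne_finset_zero fun i hi => ?_)
  obtain ⟨j, rfl⟩ := Nat.exists_eq_add_of_le' (not_lt.mp (Finset.mem_range.not.mp hi))
  rw [pow_add, ← mulVec_mulVec, hk, mulVec_zero, smul_zero]

theorem exp_map {𝕂 𝕃 : Type*} [RCLike 𝕂] [RCLike 𝕃] (f : 𝕂 →+* 𝕃) (hf : Continuous f)
    (A : Matrix n n 𝕂) :
    exp (A.map f) = (exp A).map f :=
  (map_exp f.mapMatrix (continuous_id.matrix_map hf) A).symm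

end Normed

theorem exp_mulVec_of_mulVec_eq_zero {𝕂 : Type*} [RCLike 𝕂] (A : Matrix n n 𝕂) {v : n → 𝕂}
    (hv : A *ᵥ v = 0) : exp A *ᵥ v = v := by
  rw [exp_mulVec_eq_sum_of_pow_mulVec_eq_zero A v (k := 1) (by rwa [pow_one])]
  simp

theorem exp_eq_cexp_smul_exp_sub (A : Matrix n n ℂ) (μ : ℂ) :
    exp A = Complex.exp μ • exp (A - μ • 1) := by
  have hscalar : exp (μ • 1 : Matrix n n ℂ) = Complex.exp μ • 1 := by
    rw [← Algebra.algebraMap_eq_smul_one, ← Algebra.algebraMap_eq_smul_one, algebraMap_eq_diagonal,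
      algebraMap_eq_diagonal, exp_diagonal, Pi.exp_def, Complex.exp_eq_exp_ℂ]
    rfl
  have hcomm : Commute (μ • 1 : Matrix n n ℂ) (A - μ • 1) := (Commute.one_left _).smul_left μ
  calc exp A = exp (μ • 1 + (A - μ • 1)) := by rw [add_sub_cancel]
    _ = Complex.exp μ • exp (A - μ • 1) := by
      rw [exp_add_of_commute _ _ hcomm, hscalar, smul_one_mul]

theorem tendsto_exp_smul_mulVec_of_pow_sub_mulVec_eq_zero (A : Matrix n n ℂ) {μ : ℂ}
    (hμ : μ.re < 0) {k : ℕ} {v : n → ℂ} (hv : (A - μ • 1) ^ k *ᵥ v = 0) :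
    Tendsto (fun t : ℝ => exp (t • A) *ᵥ v) atTop (𝓝 0) := by
  have hexp (t : ℝ) : exp (t • A) *ᵥ v = ∑ i ∈ Finset.range k,
      ((t : ℂ) ^ i * Complex.exp (t * μ) * (i.factorial⁻¹ : ℂ)) • ((A - μ • 1) ^ i *ᵥ v) := by
    have hshift : t • A - ((t : ℂ) * μ) • 1 = (t : ℂ) • (A - μ • 1) := by
      rw [smul_sub, mul_smul, Complex.coe_smul, Complex.coe_smul]
    have hk : ((t : ℂ) • (A - μ • 1)) ^ k *ᵥ v = 0 := by rw [smul_pow, smul_mulVec, hv, smul_zero]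
    rw [exp_eq_cexp_smul_exp_sub _ ((t : ℂ) * μ), hshift, smul_mulVec,
      exp_mulVec_eq_sum_of_pow_mulVec_eq_zero _ _ hk, Finset.smul_sum]
    refine Finset.sum_congr rfl fun i _ => ?_
    rw [smul_pow, smul_mulVec, smul_smul, smul_smul]
    ring_nf
  simp_rw [hexp]
  simpa using tendsto_finsetSum (Finset.range k) fun i _ =>
    ((Complex.tendsto_pow_mul_exp_mul_atTop_nhds_zero hμ i).mul_const
      (i.factorial⁻¹ : ℂ)).smul_const ((A - μ • 1) ^ i *ᵥ v)

theorem tendsto_exp_smul_mulVec_of_mem_maxGenEigenspace (A : Matrix n n ℂ) {μ : ℂ}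
    (hμ : μ.re < 0) {v : n → ℂ} (hv : v ∈ Module.End.maxGenEigenspace (toLin' A) μ) :
    Tendsto (fun t : ℝ => exp (t • A) *ᵥ v) atTop (𝓝 0) := by
  obtain ⟨k, hk⟩ := (Module.End.mem_maxGenEigenspace _ _ _).1 hv
  have hpow : toLin' ((A - μ • 1) ^ k) = (toLin' A - μ • 1) ^ k := by
    rw [toLin'_pow, map_sub, map_smul, toLin'_one, Module.End.one_eq_id]
  rw [← hpow, toLin'_apply] at hk
  exact tendsto_exp_smul_mulVec_of_pow_sub_mulVec_eq_zero A hμ hk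

theorem exists_tendsto_exp_smul_mulVec_of_rootMultiplicity_zero_eq_one (A : Matrix n n ℂ)
    (hsimple : A.charpoly.rootMultiplicity 0 = 1)
    (hstable : ∀ z : ℂ, A.charpoly.IsRoot z → z ≠ 0 → z.re < 0) (v : n → ℂ) :
    ∃ L, A *ᵥ L = 0 ∧ Tendsto (fun t : ℝ => exp (t • A) *ᵥ v) atTop (𝓝 L) := by
  have hv : v ∈ ⨆ μ, Module.End.maxGenEigenspace (toLin' A) μ := by
    rw [Module.End.iSup_maxGenEigenspace_eq_top]; trivial
  refine Submodule.iSup_induction _ (motive := fun w => ∃ L, A *ᵥ L = 0 ∧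
    Tendsto (fun t : ℝ => exp (t • A) *ᵥ w) atTop (𝓝 L)) hv (fun μ w hw => ?_)
    ⟨0, mulVec_zero _, by simp⟩ ?_
  · rcases eq_or_ne μ 0 with rfl | hμ
    · rw [Module.End.maxGenEigenspace_eq_eigenspace_of_rootMultiplicity_eq_one (toLin' A)
        (by rwa [charpoly_toLin']), Module.End.mem_eigenspace_iff, zero_smul, toLin'_apply] at hw
      exact ⟨w, hw, tendsto_const_nhds.congr fun t =>
        (exp_mulVec_of_mulVec_eq_zero _ (by rw [smul_mulVec, hw, smul_zero])).symm⟩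
    by_cases hroot : A.charpoly.IsRoot μ
    · exact ⟨0, mulVec_zero _,
        tendsto_exp_smul_mulVec_of_mem_maxGenEigenspace A (hstable μ hroot hμ) hw⟩
    · rw [Module.End.maxGenEigenspace_eq_bot_of_not_isRoot_charpoly (toLin' A)
        (by rwa [charpoly_toLin']), Submodule.mem_bot] at hw
      exact ⟨0, mulVec_zero _, by simp [hw]⟩
  · rintro w₁ w₂ ⟨L₁, hL₁, h₁⟩ ⟨L₂, hL₂, h₂⟩
    exact ⟨L₁ + L₂, by rw [mulVec_add, hL₁, hL₂, add_zero], by simpa [mulVec_add] using h₁.add h₂⟩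

end Matrix

theorem stmt16_convergence_to_equilibrium {m : ℕ}
    (M : Matrix (Fin m) (Fin m) ℝ)
    (hsimple : Polynomial.rootMultiplicity 0 M.charpoly = 1)
    (hstable : ∀ z : ℂ, (M.charpoly.map (algebraMap ℝ ℂ)).IsRoot z → z ≠ 0 → z.re < 0)
    (x0 : Fin m → ℝ) :
    ∃ L : Fin m → ℝ, M.mulVec L = 0 ∧
      Filter.Tendsto (fun t : ℝ => (NormedSpace.exp (t • M)).mulVec x0)
        Filter.atTop (nhds L) := by
  have hchar : (M.map (algebraMap ℝ ℂ)).charpoly = M.charpoly.map (algebraMap ℝ ℂ) :=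
    M.charpoly_map _
  have hsimple' : (M.map (algebraMap ℝ ℂ)).charpoly.rootMultiplicity 0 = 1 := by
    rw [hchar, ← map_zero (algebraMap ℝ ℂ),
      ← Polynomial.eq_rootMultiplicity_map (algebraMap ℝ ℂ).injective, hsimple]
  obtain ⟨L, hL, hlim⟩ := exists_tendsto_exp_smul_mulVec_of_rootMultiplicity_zero_eq_one
    (M.map (algebraMap ℝ ℂ)) hsimple' (hchar ▸ hstable) (algebraMap ℝ ℂ ∘ x0)
  have hcomplexify (t : ℝ) : exp (t • M.map (algebraMap ℝ ℂ)) *ᵥ algebraMap ℝ ℂ ∘ x0 =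
      algebraMap ℝ ℂ ∘ (exp (t • M) *ᵥ x0) := by
    ext i
    rw [← Matrix.map_smul _ _ fun a => by simp [Algebra.smul_def],
      exp_map _ Complex.continuous_ofReal, Function.comp_apply, RingHom.map_mulVec]
  refine ⟨fun i => (L i).re, funext fun i => by rw [← re_mulVec_map_ofReal, hL]; rfl, ?_⟩
  refine tendsto_pi_nhds.2 fun i => ?_
  have hre := (Complex.continuous_re.tendsto _).comp (tendsto_pi_nhds.1 hlim i)
  simp only [hcomplexify] at hre
  simpa [Function.comp_def] using hre
end

section
/- (Block structure of the Jacobian at a disease-free equilibrium.) Suppose F_0, F_+, F_- are linear, λ takes nonnegative values, λ vanishes on X_s, and λ is continuously differentiable in a neighborhood of a disease-free equilibrium x* ∈ X_eq. Then the map g(x) := f(x, λ(x)) is differentiable at x*, and its Jacobian has the block structure: ∂g^I/∂x^U (x*) = 0 (the I–U block vanishes), ∂g^U/∂x^U (x*) = V^U[0 ; I_{n_U}], and ∂g^I/∂x^I (x*) = V^I + ∂/∂x^I [F_+(λ(x)) x^{U*}] evaluated at x = x*, where x^{U*} is the uninfected part of x*, and g^I, g^U denote the infected and uninfected components of g. 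-/
open Matrix

noncomputable section

/-!
Write `f(x, μ) = A x + B(μ, x)` with `A` linear and `B` bilinear (this is where linearity of
`F₀, F₊, F₋` enters). Since `λ(x*) = 0`, the product rule gives `g'(x*) h = A h + B(λ'(x*) h, x*)`.
For an uninfected direction `e`, the ray `x* + t e` (`t ≥ 0`) stays in `X_s`, where `λ` vanishes,
so `λ'(x*) e = 0` and only `A e` survives; its blocks are `0` and `Vᵁ[0 ; I]`. In an infected
direction, `B(λ'(x*) h, x*)` reduces to `F₊(λ'(x*) h) x^{U*}` because `x^{I*} = 0`.
-/

section Calculus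

variable {E F G : Type*} [NormedAddCommGroup E] [NormedSpace ℝ E]
  [NormedAddCommGroup F] [NormedSpace ℝ F] [NormedAddCommGroup G] [NormedSpace ℝ G]

theorem HasFDerivAt.apply_eq_zero_of_forall_nonneg {f : E → F} {f' : E →L[ℝ] F} {x v : E}
    (hf : HasFDerivAt f f' x) (h : ∀ t : ℝ, 0 ≤ t → f (x + t • v) = f x) : f' v = 0 := by
  have hline : HasDerivAt (fun t : ℝ => x + t • v) v 0 := by
    simpa using ((hasDerivAt_id (0 : ℝ)).smul_const v).const_add x
  have hray : HasDerivWithinAt (fun t : ℝ => f (x + t • v)) (f' v) (Set.Ici 0) 0 :=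
    (hf.comp_hasDerivAt_of_eq 0 hline (by simp)).hasDerivWithinAt
  have hconst : HasDerivWithinAt (fun t : ℝ => f (x + t • v)) 0 (Set.Ici 0) 0 :=
    (hasDerivWithinAt_const (0 : ℝ) _ (f x)).congr h (by simp)
  exact (uniqueDiffOn_Ici (0 : ℝ) 0 Set.self_mem_Ici).eq_deriv _ hray hconst

theorem HasFDerivAt.add_bilinear_comp_of_eq_zero (A : E →L[ℝ] G) (B : F →L[ℝ] E →L[ℝ] G)
    {lam : E → F} {L : E →L[ℝ] F} {x : E} (hlam : HasFDerivAt lam L x) (hx : lam x = 0) :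
    HasFDerivAt (fun y => A y + B (lam y) y) (A + (B.flip x).comp L) x := by
  refine (A.hasFDerivAt.add (B.hasFDerivAt_of_bilinear hlam (hasFDerivAt_id x))).congr_fderiv ?_
  ext v
  simp [hx]

end Calculus

section Model

variable {nI nU nL : ℕ} (VI : Matrix (Fin nI) (Fin nI) ℝ) (VU : Matrix (Fin nU) (Fin nI ⊕ Fin nU) ℝ)
  {F0 : (Fin nL → ℝ) → Matrix (Fin nI) (Fin nI) ℝ} {Fp : (Fin nL → ℝ) → Matrix (Fin nI) (Fin nU) ℝ}
  {Fm : (Fin nL → ℝ) → Matrix (Fin nU) (Fin nU) ℝ}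
  (hF0 : IsLinearMap ℝ F0) (hFp : IsLinearMap ℝ Fp) (hFm : IsLinearMap ℝ Fm)

@[simp] theorem xInf_add (x y : EpiState nI nU) : xInf (x + y) = xInf x + xInf y := rfl

@[simp] theorem xUnf_add (x y : EpiState nI nU) : xUnf (x + y) = xUnf x + xUnf y := rfl

@[simp] theorem xInf_smul (c : ℝ) (x : EpiState nI nU) : xInf (c • x) = c • xInf x := rfl

@[simp] theorem xUnf_smul (c : ℝ) (x : EpiState nI nU) : xUnf (c • x) = c • xUnf x := rfl

@[simp] theorem xInf_single_inl (j : Fin nI) (c : ℝ) :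
    xInf (Pi.single (Sum.inl j) c : EpiState nI nU) = Pi.single j c := by
  ext; simp [xInf, Pi.single_apply]

@[simp] theorem xInf_single_inr (j : Fin nU) (c : ℝ) :
    xInf (Pi.single (Sum.inr j) c : EpiState nI nU) = 0 := by
  ext; simp [xInf]

def epiLinearPart : EpiState nI nU →L[ℝ] EpiState nI nU :=
  LinearMap.toContinuousLinearMap
    { toFun x := Sum.elim (VI *ᵥ xInf x) (VU *ᵥ x)
      map_add' x y := by ext (i | i) <;> simp [mulVec_add]
      map_smul' c x := by ext (i | i) <;> simp [mulVec_smul] }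

def epiInfectionPart : (Fin nL → ℝ) →L[ℝ] EpiState nI nU →L[ℝ] EpiState nI nU :=
  LinearMap.toContinuousLinearMap <| LinearMap.toContinuousLinearMap.toLinearMap ∘ₗ
    LinearMap.mk₂ ℝ (fun μ x => Sum.elim (F0 μ *ᵥ xInf x + Fp μ *ᵥ xUnf x) (-(Fm μ *ᵥ xUnf x)))
    (fun μ ν x => by
      ext (i | i) <;> simp [hF0.map_add, hFp.map_add, hFm.map_add, add_mulVec] <;> ring)
    (fun c μ x => by
      ext (i | i) <;> simp [hF0.map_smul, hFp.map_smul, hFm.map_smul, smul_mulVec, mul_add])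
    (fun μ x y => by ext (i | i) <;> simp [mulVec_add] <;> ring)
    (fun c μ x => by ext (i | i) <;> simp [mulVec_smul, mul_add])

theorem epiF_eq_linearPart_add_infectionPart (x : EpiState nI nU) (μ : Fin nL → ℝ) :
    epiF VI VU F0 Fp Fm x μ = epiLinearPart VI VU x + epiInfectionPart hF0 hFp hFm μ x := by
  ext (i | i) <;> simp [epiF, epiLinearPart, epiInfectionPart, add_mulVec] <;> ring

theorem add_smul_single_inr_mem_XsSet {x : EpiState nI nU} (hx : x ∈ XsSet nI nU) (j : Fin nU)
    {t : ℝ} (ht : 0 ≤ t) : x + t • Pi.single (Sum.inr j) 1 ∈ XsSet nI nU := by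
  refine ⟨fun i => by simp [hx.1 i], fun k => ?_⟩
  rcases eq_or_ne k j with rfl | hk
  · simpa using add_nonneg (hx.2 k) ht
  · simpa [hk] using hx.2 k

theorem HasFDerivAt.apply_single_inr_eq_zero {F : Type*} [NormedAddCommGroup F] [NormedSpace ℝ F]
    {lam : EpiState nI nU → F} {L : EpiState nI nU →L[ℝ] F} {xstar : EpiState nI nU}
    (hL : HasFDerivAt lam L xstar) (hlamXs : ∀ x ∈ XsSet nI nU, lam x = 0)
    (hxstar : xstar ∈ XsSet nI nU) (j : Fin nU) : L (Pi.single (Sum.inr j) 1) = 0 :=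
  hL.apply_eq_zero_of_forall_nonneg fun _ ht => by
    rw [hlamXs _ (add_smul_single_inr_mem_XsSet hxstar j ht), hlamXs _ hxstar]

theorem hasFDerivAt_epiF_comp_of_eq_zero
    {lam : EpiState nI nU → Fin nL → ℝ} {L : EpiState nI nU →L[ℝ] (Fin nL → ℝ)}
    {xstar : EpiState nI nU} (hL : HasFDerivAt lam L xstar) (hlam : lam xstar = 0) :
    HasFDerivAt (fun x => epiF VI VU F0 Fp Fm x (lam x))
      (epiLinearPart VI VU + ((epiInfectionPart hF0 hFp hFm).flip xstar).comp L) xstar := by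
  simp_rw [epiF_eq_linearPart_add_infectionPart VI VU hF0 hFp hFm]
  exact hL.add_bilinear_comp_of_eq_zero _ _ hlam

end Model

theorem stmt17_jacobian_block_structure_general {nI nU nL : ℕ}
    (VI : Matrix (Fin nI) (Fin nI) ℝ) (VU : Matrix (Fin nU) (Fin nI ⊕ Fin nU) ℝ)
    (F0 : (Fin nL → ℝ) → Matrix (Fin nI) (Fin nI) ℝ)
    (Fp : (Fin nL → ℝ) → Matrix (Fin nI) (Fin nU) ℝ)
    (Fm : (Fin nL → ℝ) → Matrix (Fin nU) (Fin nU) ℝ)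
    (lam : EpiState nI nU → Fin nL → ℝ)
    (hF0lin : IsLinearMap ℝ F0) (hFplin : IsLinearMap ℝ Fp) (hFmlin : IsLinearMap ℝ Fm)
    (hlamXs : ∀ x ∈ XsSet nI nU, lam x = 0)
    (xstar : EpiState nI nU) (hxeq : xstar ∈ XeqSet VI VU F0 Fp Fm)
    (hlamC1 : ContDiffAt ℝ 1 lam xstar) :
    DifferentiableAt ℝ (fun x => epiF VI VU F0 Fp Fm x (lam x)) xstar ∧
    -- the I–U block vanishes
    (∀ (i : Fin nI) (j : Fin nU),
      fderiv ℝ (fun x => epiF VI VU F0 Fp Fm x (lam x)) xstar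
        (Pi.single (Sum.inr j) 1) (Sum.inl i) = 0) ∧
    -- the U–U block is Vᵁ[0 ; I]
    (∀ (i : Fin nU) (j : Fin nU),
      fderiv ℝ (fun x => epiF VI VU F0 Fp Fm x (lam x)) xstar
        (Pi.single (Sum.inr j) 1) (Sum.inr i) = VU i (Sum.inr j)) ∧
    -- the I–I block is Vᴵ + ∂_{xᴵ}[F₊(λ(x)) x^{U*}]|_{x = x*}
    (∀ (i : Fin nI) (j : Fin nI),
      fderiv ℝ (fun x => epiF VI VU F0 Fp Fm x (lam x)) xstar
        (Pi.single (Sum.inl j) 1) (Sum.inl i) =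
      VI i j +
        fderiv ℝ (fun x : EpiState nI nU => ((Fp (lam x)).mulVec (xUnf xstar)) i) xstar
          (Pi.single (Sum.inl j) 1)) := by
  obtain ⟨hxs, -⟩ := hxeq
  have hL := (hlamC1.differentiableAt one_ne_zero).hasFDerivAt
  have hg := hasFDerivAt_epiF_comp_of_eq_zero VI VU hF0lin hFplin hFmlin hL (hlamXs xstar hxs)
  have hxI : xInf xstar = 0 := funext hxs.1
  refine ⟨hg.differentiableAt, fun i j => ?_, fun i j => ?_, fun i j => ?_⟩
  · rw [hg.fderiv]
    simp [epiLinearPart, epiInfectionPart, hL.apply_single_inr_eq_zero hlamXs hxs j]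
  · rw [hg.fderiv]
    simp [epiLinearPart, epiInfectionPart, hL.apply_single_inr_eq_zero hlamXs hxs j]
  · -- `x ↦ (F₊(λ x) x^{U*})ᵢ` is the `inl i` coordinate of `x ↦ B(λ x, x*)`, as `x^{I*} = 0`
    have hR := ((ContinuousLinearMap.proj (Sum.inl i)).comp
      ((epiInfectionPart hF0lin hFplin hFmlin).flip xstar)).hasFDerivAt.comp xstar hL
    rw [hg.fderiv, (hR.congr_of_eventuallyEq ?_).fderiv]
    · simp [epiLinearPart]
    · exact Filter.Eventually.of_forall fun x => by simp [epiInfectionPart, hxI]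

theorem stmt17_jacobian_block_structure {nI nU nL : ℕ}
    (VI : Matrix (Fin nI) (Fin nI) ℝ) (VU : Matrix (Fin nU) (Fin nI ⊕ Fin nU) ℝ)
    (F0 : (Fin nL → ℝ) → Matrix (Fin nI) (Fin nI) ℝ)
    (Fp : (Fin nL → ℝ) → Matrix (Fin nI) (Fin nU) ℝ)
    (Fm : (Fin nL → ℝ) → Matrix (Fin nU) (Fin nU) ℝ)
    (lam : EpiState nI nU → Fin nL → ℝ)
    (hF0lin : IsLinearMap ℝ F0) (hFplin : IsLinearMap ℝ Fp) (hFmlin : IsLinearMap ℝ Fm)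
    (hlamPos : ∀ x : EpiState nI nU, (∀ idx, 0 ≤ x idx) → ∀ l, 0 ≤ lam x l)
    (hlamXs : ∀ x ∈ XsSet nI nU, lam x = 0)
    (xstar : EpiState nI nU) (hxeq : xstar ∈ XeqSet VI VU F0 Fp Fm)
    (hlamC1 : ContDiffAt ℝ 1 lam xstar) :
    DifferentiableAt ℝ (fun x => epiF VI VU F0 Fp Fm x (lam x)) xstar ∧
    -- the I–U block vanishes
    (∀ (i : Fin nI) (j : Fin nU),
      fderiv ℝ (fun x => epiF VI VU F0 Fp Fm x (lam x)) xstar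
        (Pi.single (Sum.inr j) 1) (Sum.inl i) = 0) ∧
    -- the U–U block is Vᵁ[0 ; I]
    (∀ (i : Fin nU) (j : Fin nU),
      fderiv ℝ (fun x => epiF VI VU F0 Fp Fm x (lam x)) xstar
        (Pi.single (Sum.inr j) 1) (Sum.inr i) = VU i (Sum.inr j)) ∧
    -- the I–I block is Vᴵ + ∂_{xᴵ}[F₊(λ(x)) x^{U*}]|_{x = x*}
    (∀ (i : Fin nI) (j : Fin nI),
      fderiv ℝ (fun x => epiF VI VU F0 Fp Fm x (lam x)) xstar
        (Pi.single (Sum.inl j) 1) (Sum.inl i) =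
      VI i j +
        fderiv ℝ (fun x : EpiState nI nU => ((Fp (lam x)).mulVec (xUnf xstar)) i) xstar
          (Pi.single (Sum.inl j) 1)) :=
  stmt17_jacobian_block_structure_general VI VU F0 Fp Fm lam hF0lin hFplin hFmlin hlamXs xstar hxeq
    hlamC1

end
end
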